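/- arXiv:2310.11692 — 2 statements merged into one kernel-verified Lean document; each statement's English description precedes it below -/
import Mathlib

section
/- Let L be a real symmetric n×n matrix with eigendecomposition L = U Λ Uᵀ, U orthogonal, eigenvalues λ₁ ≤ ⋯ ≤ λₙ. Let g be a real polynomial with g(λⱼ) ≠ 0 for 1 ≤ j ≤ k, let Φ = g(L) with rows φᵢᵀ, and U_k the first k columns of U. Then for every probability vector p = (p₁,…,pₙ) with pᵢ > 0 and ∑ᵢ pᵢ = 1, the coherence ζ = max_{1≤i≤n} ‖U_kᵀ φᵢ‖₂²/pᵢ satisfies ζ ≥ ∑_{j=1}^{k} g(λⱼ)², and consequently (3ζ/(c₁δ²))·log(2k/ε) ≥ (3k/δ²)·log(2k/ε) for any δ, ε ∈ (0,1), where c₁ = min_{1≤j≤k} g(λⱼ)². -/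
/-!
Diagonalising `Φ = g(L)` in the eigenbasis gives `U_kᵀ φᵢ = (g(λⱼ) U_{ij})_{j ≤ k}`, and since the
columns of `U` are unit vectors the energies `‖U_kᵀ φᵢ‖²` sum over `i` to `∑_{j ≤ k} g(λⱼ)²`.
Writing this sum as `∑ᵢ pᵢ · (‖U_kᵀ φᵢ‖² / pᵢ)`, an average against the probability vector `p`,
bounds it by the maximum `ζ`. Each of the `k` terms `g(λⱼ)²` is at least `c₁ > 0`, so `k ≤ ζ / c₁`.
-/

open Matrix

theorem Polynomial.aeval_units_conj {R A : Type*} [CommSemiring R] [Semiring A] [Algebra R A]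
    (u : Aˣ) (x : A) (p : Polynomial R) :
    aeval (u * x * ↑u⁻¹) p = u * aeval x p * ↑u⁻¹ := by
  simpa [ConjAct.units_smul_def] using
    aeval_algHom_apply (MulSemiringAction.toAlgHom R A (ConjAct.toConjAct u)) x p

namespace Matrix

variable {n κ R : Type*} [Fintype n] [DecidableEq n]

theorem aeval_diagonal [CommSemiring R] (d : n → R) (p : Polynomial R) :
    Polynomial.aeval (diagonal d) p = diagonal fun i => p.eval (d i) := by
  rw [← diagonalAlgHom_apply (R := R), Polynomial.aeval_algHom_apply, Polynomial.aeval_pi_apply]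
  simp [Polynomial.coe_aeval_eq_eval]

variable [CommRing R] {U : Matrix n n R}

theorem aeval_orthogonal_conj (hU : Uᵀ * U = 1) (hU' : U * Uᵀ = 1) (D : Matrix n n R)
    (p : Polynomial R) : Polynomial.aeval (U * D * Uᵀ) p = U * Polynomial.aeval D p * Uᵀ :=
  Polynomial.aeval_units_conj ⟨U, Uᵀ, hU', hU⟩ D p

theorem sum_sq_col_eq_one (hU : Uᵀ * U = 1) (a : n) : ∑ i, U i a ^ 2 = 1 := by
  simpa [mul_apply, sq] using congrFun (congrFun hU a) a

theorem transpose_mulVec_conj_diagonal_row (hU : Uᵀ * U = 1) (d : n → R) (i a : n) :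
    (Uᵀ *ᵥ (U * diagonal d * Uᵀ) i) a = U i a * d a := by
  have hΦU : U * diagonal d * Uᵀ * U = U * diagonal d := by
    rw [Matrix.mul_assoc, hU, Matrix.mul_one]
  rw [mulVec_transpose, ← mul_apply_eq_vecMul, hΦU, mul_diagonal]

theorem sum_sum_sq_submatrix_transpose_mulVec_conj_diagonal [Fintype κ] (hU : Uᵀ * U = 1)
    (d : n → R) (f : κ → n) :
    ∑ i, ∑ j, ((U.submatrix id f)ᵀ *ᵥ (U * diagonal d * Uᵀ) i) j ^ 2 = ∑ j, d (f j) ^ 2 := by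
  have hsub : ∀ v : n → R, (U.submatrix id f)ᵀ *ᵥ v = fun j => (Uᵀ *ᵥ v) (f j) := fun _ => rfl
  simp_rw [hsub, transpose_mulVec_conj_diagonal_row hU, mul_pow]
  rw [Finset.sum_comm]
  simp_rw [← Finset.sum_mul, sum_sq_col_eq_one hU, one_mul]

end Matrix

theorem sum_le_ciSup_div_of_sum_eq_one {ι : Type*} [Fintype ι] (a p : ι → ℝ)
    (hp : ∀ i, 0 < p i) (hp1 : ∑ i, p i = 1) : ∑ i, a i ≤ ⨆ i, a i / p i := by
  have hbdd : BddAbove (Set.range fun i => a i / p i) := (Set.finite_range _).bddAbove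
  calc ∑ i, a i = ∑ i, a i / p i * p i := by
        simp_rw [div_mul_cancel₀ _ (hp _).ne']
    _ ≤ ∑ i, (⨆ i, a i / p i) * p i := by
        gcongr with i
        · exact (hp i).le
        · exact le_ciSup hbdd i
    _ = ⨆ i, a i / p i := by rw [← Finset.mul_sum, hp1, mul_one]

theorem Fintype.card_le_div_ciInf_of_sum_le {ι : Type*} [Fintype ι] [Nonempty ι] {f : ι → ℝ}
    {S : ℝ} (hf : ∀ i, 0 < f i) (hS : ∑ i, f i ≤ S) : (card ι : ℝ) ≤ S / ⨅ i, f i := by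
  obtain ⟨i₀, hi₀⟩ := exists_eq_ciInf_of_finite (f := f)
  rw [le_div_iff₀ (hi₀ ▸ hf i₀), ← nsmul_eq_mul, ← Finset.card_univ]
  exact (Finset.card_nsmul_le_sum _ _ _ fun i _ =>
    ciInf_le (Set.finite_range f).bddBelow i).trans hS

theorem coherence_lower_bound_general (n k : ℕ) (hk : k ≤ n)
    (L U : Matrix (Fin n) (Fin n) ℝ) (lam : Fin n → ℝ)
    (hU : Uᵀ * U = 1) (hU' : U * Uᵀ = 1)
    (hL : L = U * Matrix.diagonal lam * Uᵀ)
    (g : Polynomial ℝ) (hg : ∀ j : Fin k, g.eval (lam (Fin.castLE hk j)) ≠ 0)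
    (Φ : Matrix (Fin n) (Fin n) ℝ) (hΦ : Φ = Polynomial.aeval L g)
    (Uk : Matrix (Fin n) (Fin k) ℝ) (hUk : Uk = U.submatrix id (Fin.castLE hk))
    (p : Fin n → ℝ) (hp : ∀ i, 0 < p i) (hp1 : ∑ i, p i = 1)
    (ζ c₁ : ℝ)
    (hζ : ζ = ⨆ i : Fin n, (∑ j : Fin k, ((Ukᵀ *ᵥ Φ i) j) ^ 2) / p i)
    (hc₁ : c₁ = ⨅ j : Fin k, (g.eval (lam (Fin.castLE hk j))) ^ 2)
    (δ ε : ℝ) (hε : ε ∈ Set.Ioo (0 : ℝ) 1) :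
    (∑ j : Fin k, (g.eval (lam (Fin.castLE hk j))) ^ 2 ≤ ζ) ∧
      (3 * k / δ ^ 2 * Real.log (2 * k / ε) ≤
        3 * ζ / (c₁ * δ ^ 2) * Real.log (2 * k / ε)) := by
  have hΦ' : Φ = U * diagonal (fun a => g.eval (lam a)) * Uᵀ := by
    rw [hΦ, hL, aeval_orthogonal_conj hU hU', aeval_diagonal]
  have hζ_ge : ∑ j : Fin k, (g.eval (lam (Fin.castLE hk j))) ^ 2 ≤ ζ :=
    calc ∑ j : Fin k, (g.eval (lam (Fin.castLE hk j))) ^ 2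
        = ∑ i, ∑ j : Fin k, ((Ukᵀ *ᵥ Φ i) j) ^ 2 := by
          rw [hΦ', hUk, sum_sum_sq_submatrix_transpose_mulVec_conj_diagonal hU]
      _ ≤ ζ := hζ ▸ sum_le_ciSup_div_of_sum_eq_one _ p hp hp1
  refine ⟨hζ_ge, ?_⟩
  rcases Nat.eq_zero_or_pos k with rfl | hk_pos
  · simp
  have : Nonempty (Fin k) := ⟨⟨0, hk_pos⟩⟩
  have hk_le : (k : ℝ) ≤ ζ / c₁ := by
    simpa [hc₁] using
      Fintype.card_le_div_ciInf_of_sum_le (fun j => pow_two_pos_of_ne_zero (hg j)) hζ_ge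
  have hlog : 0 ≤ Real.log (2 * k / ε) := by
    have hk_one : (1 : ℝ) ≤ k := by exact_mod_cast hk_pos
    refine Real.log_nonneg ((le_div_iff₀ hε.1).2 ?_)
    linarith [hε.2]
  calc 3 * k / δ ^ 2 * Real.log (2 * k / ε)
      ≤ 3 * (ζ / c₁) / δ ^ 2 * Real.log (2 * k / ε) := by gcongr
    _ = 3 * ζ / (c₁ * δ ^ 2) * Real.log (2 * k / ε) := by ring

/-- Remark II.1: for any sampling probability distribution `p` with positive entries,
the graph weighted coherence `ζ = maxᵢ ‖U_kᵀ φᵢ‖₂²/pᵢ` satisfies `ζ ≥ ∑_{j=1}^k g(λⱼ)²`,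
and consequently `(3ζ/(c₁δ²))·log(2k/ε) ≥ (3k/δ²)·log(2k/ε)`. -/
theorem coherence_lower_bound (n k : ℕ) (hk : k ≤ n)
    (L U : Matrix (Fin n) (Fin n) ℝ) (lam : Fin n → ℝ) (hmono : Monotone lam)
    (hU : Uᵀ * U = 1) (hU' : U * Uᵀ = 1)
    (hL : L = U * Matrix.diagonal lam * Uᵀ)
    (g : Polynomial ℝ) (hg : ∀ j : Fin k, g.eval (lam (Fin.castLE hk j)) ≠ 0)
    (Φ : Matrix (Fin n) (Fin n) ℝ) (hΦ : Φ = Polynomial.aeval L g)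
    (Uk : Matrix (Fin n) (Fin k) ℝ) (hUk : Uk = U.submatrix id (Fin.castLE hk))
    (p : Fin n → ℝ) (hp : ∀ i, 0 < p i) (hp1 : ∑ i, p i = 1)
    (ζ c₁ : ℝ)
    (hζ : ζ = ⨆ i : Fin n, (∑ j : Fin k, ((Ukᵀ *ᵥ Φ i) j) ^ 2) / p i)
    (hc₁ : c₁ = ⨅ j : Fin k, (g.eval (lam (Fin.castLE hk j))) ^ 2)
    (δ ε : ℝ) (hδ : δ ∈ Set.Ioo (0 : ℝ) 1) (hε : ε ∈ Set.Ioo (0 : ℝ) 1) :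
    (∑ j : Fin k, (g.eval (lam (Fin.castLE hk j))) ^ 2 ≤ ζ) ∧
      (3 * k / δ ^ 2 * Real.log (2 * k / ε) ≤
        3 * ζ / (c₁ * δ ^ 2) * Real.log (2 * k / ε)) :=
  coherence_lower_bound_general n k hk L U lam hU hU' hL g hg Φ hΦ Uk hUk p hp hp1 ζ c₁ hζ hc₁ δ ε
    hε
end

section
/- There exists an absolute constant γ > 0 with the following property. Let L be a real symmetric n×n matrix with eigendecomposition L = U Λ Uᵀ, U orthogonal, eigenvalues λ₁ ≤ ⋯ ≤ λₙ with λ_k < λ_{k+1}, let Φ with rows φᵢᵀ be any real n×n matrix, and let U_k be the first k columns of U. Let r¹,…,rᵗ ∈ ℝⁿ be independent zero-mean Gaussian random vectors each with covariance matrix (1/t)·I, and set r^ℓ_b = U_k U_kᵀ r^ℓ (the filtering of r^ℓ by the ideal low-pass filter with cut-off frequency λ_k). Then for any ε, δ ∈ (0,1), if t ≥ (γ/δ²)·log(2n/ε), with probability at least 1−ε the following holds simultaneously for all i ∈ {1,…,n}: (1−δ)·‖U_kᵀ φᵢ‖₂² ≤ ∑_{ℓ=1}^{t} ⟨r^ℓ_b,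 φᵢ⟩² ≤ (1+δ)·‖U_kᵀ φᵢ‖₂². -/
/-!
For a fixed row, `⟨U_k U_kᵀ r^ℓ, φᵢ⟩ = ⟨aᵢ, r^ℓ⟩` with `aᵢ = U_k U_kᵀ φᵢ`, and `‖aᵢ‖² = ‖U_kᵀ φᵢ‖²`
because `U_k` has orthonormal columns. The variables `⟨aᵢ, r^ℓ⟩`, `ℓ = 1, …, t`, are independent
centred Gaussians of variance `‖aᵢ‖² / t`, so the estimated energy is `‖aᵢ‖² / t` times a
`χ²` variable with `t` degrees of freedom, whose moment generating function is
`(1 - 2θ)^(-t/2)`. Chernoff's bound with `θ = δ/8` (upper tail) and `θ = -δ/4` (lower tail)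
bounds each tail by `exp (-δ² t / 16)`, and a union bound over the `n` rows gives the theorem
with `γ = 16`.
-/

open Matrix MeasureTheory ProbabilityTheory Real
open scoped NNReal ENNReal

namespace Matrix

variable {m k R : Type*} [CommRing R]

lemma transpose_mul_self_submatrix_eq_one [Fintype m] [DecidableEq m] [DecidableEq k]
    {U : Matrix m m R} (hU : Uᵀ * U = 1) {e : k → m} (he : Function.Injective e) :
    (U.submatrix id e)ᵀ * U.submatrix id e = 1 := by
  rw [transpose_submatrix, ← submatrix_mul _ _ _ _ _ Function.bijective_id, hU,
    submatrix_one _ he]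

lemma mulVec_transpose_mulVec_dotProduct_comm [Fintype m] [Fintype k] (A : Matrix m k R)
    (x y : m → R) : (A *ᵥ (Aᵀ *ᵥ x)) ⬝ᵥ y = (A *ᵥ (Aᵀ *ᵥ y)) ⬝ᵥ x := by
  rw [dotProduct_comm, ← dotProduct_transpose_mulVec, dotProduct_comm,
    dotProduct_transpose_mulVec, dotProduct_comm]

lemma mulVec_dotProduct_mulVec_of_transpose_mul_self_eq_one [Fintype m] [Fintype k]
    [DecidableEq k] {A : Matrix m k R} (hA : Aᵀ * A = 1) (z : k → R) :
    (A *ᵥ z) ⬝ᵥ (A *ᵥ z) = z ⬝ᵥ z := by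
  rw [← dotProduct_transpose_mulVec, mulVec_mulVec, hA, one_mulVec]

end Matrix

lemma inv_sqrt_pow_eq_exp {y : ℝ} (hy : 0 < y) (c : ℕ) :
    (√y)⁻¹ ^ c = rexp (-(c * log y / 2)) := by
  rw [← exp_log (by positivity : 0 < (√y)⁻¹ ^ c), log_pow, log_inv, log_sqrt hy.le]
  ring_nf

/-- Per-sample Chernoff exponent of the upper `χ²` tail at `θ = δ/8`; the next lemma is the
lower tail at `θ = -δ/4`. -/
lemma sq_div_sixteen_le_log_one_sub {δ : ℝ} (hδ2 : δ ≤ 2) :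
    δ ^ 2 / 16 ≤ δ / 8 * (1 + δ) + log (1 - δ / 4) / 2 := by
  have hlog := one_sub_inv_le_log_of_pos (by linarith : 0 < 1 - δ / 4)
  have hd : 0 < 4 - δ := by linarith
  have : 1 - (1 - δ / 4)⁻¹ = -(δ / (4 - δ)) := by field_simp; ring
  have : δ / (4 - δ) ≤ δ / 4 + δ ^ 2 / 8 := by
    rw [div_le_iff₀ hd]; nlinarith
  linarith

lemma sq_div_sixteen_le_log_one_add {δ : ℝ} (hδ0 : 0 ≤ δ) :
    δ ^ 2 / 16 ≤ log (1 + δ / 2) / 2 - δ / 4 * (1 - δ) := by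
  have hlog := one_sub_inv_le_log_of_pos (by linarith : 0 < 1 + δ / 2)
  have : 1 - (1 + δ / 2)⁻¹ = δ / (2 + δ) := by field_simp; ring
  have : δ / 2 - δ ^ 2 * 3 / 8 ≤ δ / (2 + δ) := by
    rw [le_div_iff₀ (by linarith)]; nlinarith
  linarith

lemma mul_exp_neg_le_of_log_div_le {N ε s : ℝ} (hN : 0 < N) (hε : 0 < ε)
    (h : log (N / ε) ≤ s) : N * rexp (-s) ≤ ε := by
  calc N * rexp (-s) ≤ N * rexp (-log (N / ε)) := by gcongr
    _ = ε := by rw [exp_neg, exp_log (by positivity), inv_div]; field_simp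

namespace MeasureTheory

lemma ofReal_one_sub_le_measure_iInter {Ω ι : Type*} {mΩ : MeasurableSpace Ω} {P : Measure Ω}
    [IsProbabilityMeasure P] [Fintype ι] {E : ι → Set Ω} {b : ℝ} (hb : 0 ≤ b)
    (h : ∀ i, P (E i)ᶜ ≤ ENNReal.ofReal b) :
    ENNReal.ofReal (1 - Fintype.card ι * b) ≤ P (⋂ i, E i) := by
  have hcompl : P (⋂ i, E i)ᶜ ≤ ENNReal.ofReal (Fintype.card ι * b) := by
    rw [Set.compl_iInter]
    calc P (⋃ i, (E i)ᶜ) ≤ ∑ i, P (E i)ᶜ := measure_iUnion_fintype_le _ _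
      _ ≤ ∑ _ : ι, ENNReal.ofReal b := Finset.sum_le_sum fun i _ ↦ h i
      _ = _ := by simp [ENNReal.ofReal_mul]
  have hsplit : (1 : ℝ≥0∞) ≤ P (⋂ i, E i) + P (⋂ i, E i)ᶜ := by
    rw [← measure_univ (μ := P), ← Set.union_compl_self (⋂ i, E i)]
    exact measure_union_le _ _
  rw [ENNReal.ofReal_sub _ (by positivity), ENNReal.ofReal_one]
  exact tsub_le_iff_right.mpr (hsplit.trans (add_le_add le_rfl hcompl))

end MeasureTheory

namespace ProbabilityTheory

section GaussianSquare

variable {v : ℝ≥0} {θ : ℝ}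

lemma gaussianPDFReal_zero_mul_exp_mul_sq (hv : v ≠ 0) (x : ℝ) :
    gaussianPDFReal 0 v x * rexp (θ * x ^ 2) =
      (√(2 * π * v))⁻¹ * rexp (-((1 - 2 * θ * v) / (2 * v)) * x ^ 2) := by
  have hv' : (v : ℝ) ≠ 0 := by exact_mod_cast hv
  rw [gaussianPDFReal, mul_assoc, ← exp_add]
  congr 2
  field_simp
  ring

lemma mgf_sq_gaussianReal (hθ : 2 * θ * v < 1) :
    mgf (fun x ↦ x ^ 2) (gaussianReal 0 v) θ = (√(1 - 2 * θ * v))⁻¹ := by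
  rcases eq_or_ne v 0 with rfl | hv
  · simp [mgf]
  have hv' : (0 : ℝ) < v := by positivity
  have hb : 0 < 1 - 2 * θ * v := by linarith
  rw [mgf, integral_gaussianReal_eq_integral_smul hv]
  simp_rw [smul_eq_mul, gaussianPDFReal_zero_mul_exp_mul_sq hv]
  rw [integral_const_mul, integral_gaussian, div_div_eq_mul_div, sqrt_div' _ hb.le,
    mul_left_comm, ← mul_assoc, ← mul_div_assoc, inv_mul_cancel₀ (by positivity), one_div]

end GaussianSquare

variable {Ω ι : Type*} {mΩ : MeasurableSpace Ω} {P : Measure Ω}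

lemma iIndepFun.hasLaw_finsetSum_gaussianReal {X : ι → Ω → ℝ} (hX : iIndepFun X P)
    {m : ι → ℝ} {w : ι → ℝ≥0} (hlaw : ∀ i, HasLaw (X i) (gaussianReal (m i) (w i)) P)
    (s : Finset ι) :
    HasLaw (∑ i ∈ s, X i) (gaussianReal (∑ i ∈ s, m i) (∑ i ∈ s, w i)) P := by
  classical
  have := hX.isProbabilityMeasure
  induction s using Finset.induction_on with
  | empty => exact ⟨aemeasurable_const, by simp [Pi.zero_def, Measure.map_const]⟩
  | insert i s hi ih =>
    simp only [Finset.sum_insert hi]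
    refine ⟨(hlaw i).aemeasurable.add ih.aemeasurable,
      gaussianReal_add_gaussianReal_of_indepFun ?_ (hlaw i).map_eq ih.map_eq⟩
    exact (hX.indepFun_finsetSum_of_notMem₀ (fun j ↦ (hlaw j).aemeasurable) hi).symm

lemma hasLaw_dotProduct_pi_gaussianReal {κ : Type*} [Fintype κ] (a : κ → ℝ) (v : ℝ≥0) :
    HasLaw (fun x : κ → ℝ ↦ a ⬝ᵥ x) (gaussianReal 0 ((a ⬝ᵥ a).toNNReal * v))
      (Measure.pi fun _ ↦ gaussianReal 0 v) := by
  have hlaw (s : κ) : HasLaw (fun x : κ → ℝ ↦ a s * x s)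
      (gaussianReal 0 (⟨a s ^ 2, sq_nonneg _⟩ * v)) (Measure.pi fun _ ↦ gaussianReal 0 v) := by
    have := gaussianReal_const_mul
      (measurePreserving_eval (fun _ : κ ↦ gaussianReal 0 v) s).hasLaw (a s)
    rwa [mul_zero] at this
  have hindep := iIndepFun_pi (μ := fun _ : κ ↦ gaussianReal 0 v)
    (X := fun s x ↦ a s * x) (fun s ↦ by fun_prop)
  convert hindep.hasLaw_finsetSum_gaussianReal hlaw Finset.univ using 2
  · simp [dotProduct]
  · simp
  · ext
    simp only [dotProduct, ← sq, NNReal.coe_mul, NNReal.coe_sum, Finset.sum_mul,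
      Real.coe_toNNReal _ (Finset.sum_nonneg fun _ _ ↦ sq_nonneg _)]
    rfl

section SumOfSquares

variable [Fintype ι] {Y : ι → Ω → ℝ} {v : ℝ≥0} {θ δ : ℝ}

lemma iIndepFun.mgf_sum_sq (hY : iIndepFun Y P)
    (hlaw : ∀ ℓ, HasLaw (Y ℓ) (gaussianReal 0 v) P) (hθ : 2 * θ * v < 1) :
    mgf (fun ω ↦ ∑ ℓ, Y ℓ ω ^ 2) P θ = (√(1 - 2 * θ * v))⁻¹ ^ Fintype.card ι := by
  have hsq : iIndepFun (fun ℓ ω ↦ Y ℓ ω ^ 2) P := hY.comp (fun _ x ↦ x ^ 2) fun _ ↦ by fun_prop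
  have hterm (ℓ : ι) : mgf (fun ω ↦ Y ℓ ω ^ 2) P θ = (√(1 - 2 * θ * v))⁻¹ := by
    rw [← mgf_sq_gaussianReal hθ, ← (hlaw ℓ).map_eq,
      mgf_map (hlaw ℓ).aemeasurable (by fun_prop)]
    rfl
  have hsum : (fun ω ↦ ∑ ℓ, Y ℓ ω ^ 2) = ∑ ℓ, fun ω ↦ Y ℓ ω ^ 2 := by
    ext ω; simp
  rw [hsum, hsq.mgf_sum₀ (fun ℓ ↦ (hlaw ℓ).aemeasurable.pow_const 2),
    Finset.prod_congr rfl fun ℓ _ ↦ hterm ℓ, Finset.prod_const, Finset.card_univ]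

/-- Integrability comes for free: without it the mgf would be `0`. -/
lemma iIndepFun.integrable_exp_mul_sum_sq (hY : iIndepFun Y P)
    (hlaw : ∀ ℓ, HasLaw (Y ℓ) (gaussianReal 0 v) P) (hθ : 2 * θ * v < 1) :
    Integrable (fun ω ↦ rexp (θ * ∑ ℓ, Y ℓ ω ^ 2)) P := by
  by_contra h
  have hpos : 0 < 1 - 2 * θ * v := by linarith
  exact (pow_pos (inv_pos.mpr (sqrt_pos.mpr hpos)) _).ne'
    ((hY.mgf_sum_sq hlaw hθ).symm.trans (mgf_undef h))

lemma iIndepFun.measure_sum_sq_gt_le (hY : iIndepFun Y P)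
    (hlaw : ∀ ℓ, HasLaw (Y ℓ) (gaussianReal 0 v) P) (hv : v ≠ 0) (hδ0 : 0 ≤ δ) (hδ2 : δ ≤ 2) :
    P {ω | (1 + δ) * (Fintype.card ι * v) < ∑ ℓ, Y ℓ ω ^ 2} ≤
      ENNReal.ofReal (rexp (-(δ ^ 2 * Fintype.card ι / 16))) := by
  have := hY.isProbabilityMeasure
  have hv' : (0 : ℝ) < v := by positivity
  set c : ℝ := (Fintype.card ι : ℝ)
  set θ : ℝ := δ / (8 * v) with hθ_def
  have hθv : θ * v = δ / 8 := by rw [hθ_def]; field_simp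
  have hθ : 2 * θ * v < 1 := by linarith
  have hchernoff := measure_ge_le_exp_mul_mgf ((1 + δ) * (c * v)) (by positivity)
    (hY.integrable_exp_mul_sum_sq hlaw hθ)
  rw [hY.mgf_sum_sq hlaw hθ, inv_sqrt_pow_eq_exp (by linarith), ← exp_add,
    show 2 * θ * v = δ / 4 by linarith] at hchernoff
  have hrate := mul_le_mul_of_nonneg_left (sq_div_sixteen_le_log_one_sub hδ2)
    (Nat.cast_nonneg (Fintype.card ι) : (0 : ℝ) ≤ c)
  calc P {ω | (1 + δ) * (c * v) < ∑ ℓ, Y ℓ ω ^ 2}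
      ≤ P {ω | (1 + δ) * (c * v) ≤ ∑ ℓ, Y ℓ ω ^ 2} :=
        measure_mono <| Set.ofPred_subset_ofPred.mpr fun _ ↦ le_of_lt
    _ = ENNReal.ofReal (P.real {ω | (1 + δ) * (c * v) ≤ ∑ ℓ, Y ℓ ω ^ 2}) :=
        (ofReal_measureReal).symm
    _ ≤ _ := by
      refine ENNReal.ofReal_le_ofReal (hchernoff.trans (exp_le_exp.mpr ?_))
      have : -θ * ((1 + δ) * (c * v)) = -(c * (δ / 8 * (1 + δ))) := by
        linear_combination (-(1 + δ) * c) * hθv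
      rw [this]
      linarith

lemma iIndepFun.measure_sum_sq_lt_le (hY : iIndepFun Y P)
    (hlaw : ∀ ℓ, HasLaw (Y ℓ) (gaussianReal 0 v) P) (hv : v ≠ 0) (hδ0 : 0 ≤ δ) :
    P {ω | ∑ ℓ, Y ℓ ω ^ 2 < (1 - δ) * (Fintype.card ι * v)} ≤
      ENNReal.ofReal (rexp (-(δ ^ 2 * Fintype.card ι / 16))) := by
  have := hY.isProbabilityMeasure
  have hv' : (0 : ℝ) < v := by positivity
  set c : ℝ := (Fintype.card ι : ℝ)
  set θ : ℝ := -(δ / (4 * v)) with hθ_def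
  have hθv : θ * v = -(δ / 4) := by rw [hθ_def]; field_simp
  have hθ : 2 * θ * v < 1 := by linarith
  have hchernoff := measure_le_le_exp_mul_mgf ((1 - δ) * (c * v))
    (neg_nonpos.mpr (by positivity)) (hY.integrable_exp_mul_sum_sq hlaw hθ)
  rw [hY.mgf_sum_sq hlaw hθ, inv_sqrt_pow_eq_exp (by linarith), ← exp_add,
    show 1 - 2 * θ * v = 1 + δ / 2 by linarith] at hchernoff
  have hrate := mul_le_mul_of_nonneg_left (sq_div_sixteen_le_log_one_add hδ0)
    (Nat.cast_nonneg (Fintype.card ι) : (0 : ℝ) ≤ c)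
  calc P {ω | ∑ ℓ, Y ℓ ω ^ 2 < (1 - δ) * (c * v)}
      ≤ P {ω | ∑ ℓ, Y ℓ ω ^ 2 ≤ (1 - δ) * (c * v)} :=
        measure_mono <| Set.ofPred_subset_ofPred.mpr fun _ ↦ le_of_lt
    _ = ENNReal.ofReal (P.real {ω | ∑ ℓ, Y ℓ ω ^ 2 ≤ (1 - δ) * (c * v)}) :=
        (ofReal_measureReal).symm
    _ ≤ _ := by
      refine ENNReal.ofReal_le_ofReal (hchernoff.trans (exp_le_exp.mpr ?_))
      have : -θ * ((1 - δ) * (c * v)) = c * (δ / 4 * (1 - δ)) := by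
        linear_combination (-(1 - δ) * c) * hθv
      rw [this]
      linarith

end SumOfSquares

lemma measure_sum_sq_dotProduct_notMem_Icc_le {κ : Type*} [Fintype ι] [Fintype κ]
    (a : κ → ℝ) {δ : ℝ} (hδ0 : 0 ≤ δ) (hδ2 : δ ≤ 2) :
    (Measure.pi fun _ : ι ↦ Measure.pi fun _ : κ ↦ gaussianReal 0 (Fintype.card ι : ℝ≥0)⁻¹)
      {r | ∑ ℓ, (a ⬝ᵥ r ℓ) ^ 2 ∉ Set.Icc ((1 - δ) * (a ⬝ᵥ a)) ((1 + δ) * (a ⬝ᵥ a))} ≤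
      ENNReal.ofReal (2 * rexp (-(δ ^ 2 * Fintype.card ι / 16))) := by
  set μ := Measure.pi fun _ : ι ↦ Measure.pi fun _ : κ ↦ gaussianReal 0 (Fintype.card ι : ℝ≥0)⁻¹
  rcases isEmpty_or_nonempty ι with hι | hι
  · exact prob_le_one.trans (by simp [Fintype.card_eq_zero])
  have ha_nonneg : 0 ≤ a ⬝ᵥ a := Finset.sum_nonneg fun s _ ↦ mul_self_nonneg (a s)
  rcases ha_nonneg.eq_or_lt with ha | ha
  · simp [dotProduct_self_eq_zero.mp ha.symm]
  set v : ℝ≥0 := (a ⬝ᵥ a).toNNReal * (Fintype.card ι : ℝ≥0)⁻¹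
  have hv : v ≠ 0 := by positivity
  have hcv : (Fintype.card ι : ℝ) * v = a ⬝ᵥ a := by
    simp only [NNReal.coe_mul, Real.coe_toNNReal _ ha.le, NNReal.coe_inv, NNReal.coe_natCast, v]
    field_simp
  have hY : iIndepFun (fun ℓ (r : ι → κ → ℝ) ↦ a ⬝ᵥ r ℓ) μ :=
    iIndepFun_pi (X := fun _ x ↦ a ⬝ᵥ x) fun _ ↦ by fun_prop
  have hlaw (ℓ : ι) : HasLaw (fun r : ι → κ → ℝ ↦ a ⬝ᵥ r ℓ) (gaussianReal 0 v) μ :=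
    (hasLaw_dotProduct_pi_gaussianReal a _).comp
      (measurePreserving_eval (fun _ : ι ↦ Measure.pi fun _ : κ ↦ gaussianReal 0 _) ℓ).hasLaw
  calc μ {r | ∑ ℓ, (a ⬝ᵥ r ℓ) ^ 2 ∉ Set.Icc ((1 - δ) * (a ⬝ᵥ a)) ((1 + δ) * (a ⬝ᵥ a))}
      ≤ μ ({r | (1 + δ) * (Fintype.card ι * v) < ∑ ℓ, (a ⬝ᵥ r ℓ) ^ 2} ∪
          {r | ∑ ℓ, (a ⬝ᵥ r ℓ) ^ 2 < (1 - δ) * (Fintype.card ι * v)}) := by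
        refine measure_mono fun r hr ↦ ?_
        rw [hcv]
        simp only [Set.mem_ofPred_eq, Set.mem_Icc, not_and_or, not_le] at hr
        exact hr.symm
    _ ≤ _ := (measure_union_le _ _).trans (by
        rw [two_mul, ENNReal.ofReal_add (by positivity) (by positivity)]
        exact add_le_add (hY.measure_sum_sq_gt_le hlaw hv hδ0 hδ2)
          (hY.measure_sum_sq_lt_le hlaw hv hδ0))

end ProbabilityTheory

/-- Theorem III.1: there is an absolute constant `γ > 0` such that, if
`r¹,…,rᵗ ∈ ℝⁿ` are i.i.d. zero-mean Gaussian vectors with covariance `(1/t)·I`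
(equivalently, all coordinates are i.i.d. `N(0, 1/t)`) and `r^ℓ_b = U_k U_kᵀ r^ℓ`
is the ideal low-pass filtering of `r^ℓ` with cut-off `λ_k` (using `λ_k < λ_{k+1}`),
then for `t ≥ (γ/δ²)·log(2n/ε)`, with probability at least `1−ε`,
`(1−δ)‖U_kᵀφᵢ‖₂² ≤ ∑_ℓ ⟨r^ℓ_b, φᵢ⟩² ≤ (1+δ)‖U_kᵀφᵢ‖₂²` for all `i`. -/
theorem estimated_energies_concentration :
    ∃ γ : ℝ, 0 < γ ∧
      ∀ (n k : ℕ) (hk1 : 1 ≤ k) (hkn : k < n)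
        (L U : Matrix (Fin n) (Fin n) ℝ) (lam : Fin n → ℝ),
        Monotone lam →
        lam ⟨k - 1, by omega⟩ < lam ⟨k, hkn⟩ →
        Uᵀ * U = 1 → U * Uᵀ = 1 →
        L = U * Matrix.diagonal lam * Uᵀ →
        ∀ (Φ : Matrix (Fin n) (Fin n) ℝ) (Uk : Matrix (Fin n) (Fin k) ℝ),
          Uk = U.submatrix id (Fin.castLE hkn.le) →
        ∀ (ε δ : ℝ), ε ∈ Set.Ioo (0 : ℝ) 1 → δ ∈ Set.Ioo (0 : ℝ) 1 →
        ∀ t : ℕ, γ / δ ^ 2 * Real.log (2 * n / ε) ≤ (t : ℝ) →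
        ENNReal.ofReal (1 - ε) ≤
          (Measure.pi fun _ : Fin t => Measure.pi fun _ : Fin n =>
              gaussianReal 0 (t : NNReal)⁻¹)
            {r : Fin t → Fin n → ℝ | ∀ i : Fin n,
              (1 - δ) * (∑ j : Fin k, ((Ukᵀ *ᵥ Φ i) j) ^ 2) ≤
                  (∑ ℓ : Fin t, (∑ s : Fin n, (Uk *ᵥ (Ukᵀ *ᵥ r ℓ)) s * Φ i s) ^ 2) ∧
                (∑ ℓ : Fin t, (∑ s : Fin n, (Uk *ᵥ (Ukᵀ *ᵥ r ℓ)) s * Φ i s) ^ 2) ≤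
                  (1 + δ) * (∑ j : Fin k, ((Ukᵀ *ᵥ Φ i) j) ^ 2)} := by
  refine ⟨16, by norm_num, ?_⟩
  rintro n k - hkn L U lam - - hUtU - - Φ Uk hUk_def ε δ ⟨hε0, -⟩ ⟨hδ0, hδ1⟩ t ht
  have hUk : Ukᵀ * Uk = 1 :=
    hUk_def ▸ transpose_mul_self_submatrix_eq_one hUtU (Fin.castLE_injective hkn.le)
  set a : Fin n → Fin n → ℝ := fun i ↦ Uk *ᵥ (Ukᵀ *ᵥ Φ i)
  have henergy (i : Fin n) : ∑ j : Fin k, ((Ukᵀ *ᵥ Φ i) j) ^ 2 = a i ⬝ᵥ a i := by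
    rw [mulVec_dotProduct_mulVec_of_transpose_mul_self_eq_one hUk]
    simp only [dotProduct, sq]
  have hfilter (i : Fin n) (x : Fin n → ℝ) : ∑ s, (Uk *ᵥ (Ukᵀ *ᵥ x)) s * Φ i s = a i ⬝ᵥ x :=
    mulVec_transpose_mulVec_dotProduct_comm Uk x (Φ i)
  have htail : (n : ℝ) * (2 * rexp (-(δ ^ 2 * t / 16))) ≤ ε := by
    rw [← mul_assoc, mul_comm (n : ℝ)]
    refine mul_exp_neg_le_of_log_div_le (by simpa using hkn.pos) hε0 ?_
    calc log (2 * n / ε) = δ ^ 2 / 16 * (16 / δ ^ 2 * log (2 * n / ε)) := by field_simp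
      _ ≤ δ ^ 2 / 16 * t := by gcongr
      _ = δ ^ 2 * t / 16 := by ring
  calc ENNReal.ofReal (1 - ε)
      ≤ ENNReal.ofReal
          (1 - Fintype.card (Fin n) * (2 * rexp (-(δ ^ 2 * Fintype.card (Fin t) / 16)))) :=
        ENNReal.ofReal_le_ofReal (by simp only [Fintype.card_fin]; linarith)
    _ ≤ _ := ofReal_one_sub_le_measure_iInter (by positivity) (E := fun i ↦
        {r | ∑ ℓ, (a i ⬝ᵥ r ℓ) ^ 2 ∈ Set.Icc ((1 - δ) * (a i ⬝ᵥ a i)) ((1 + δ) * (a i ⬝ᵥ a i))})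
        fun i ↦ ?_
    _ ≤ _ := measure_mono fun r hr i ↦ by
        simpa only [henergy, hfilter, Set.mem_ofPred_eq, Set.mem_Icc] using Set.mem_iInter.mp hr i
  simpa only [Set.compl_ofPred, Fintype.card_fin] using
    measure_sum_sq_dotProduct_notMem_Icc_le (ι := Fin t) (a i) hδ0.le (by linarith)
end
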